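/- Let S be an integral domain, σ ∈ Aut(S) of order n ≥ 2, f monic of degree m, b ∈ S^×, and G : S_f → S_b a non-monomial homomorphism with G|_S = τ for τ commuting with σ. Let k = deg(G(t)) and let s > 1 be the least integer with sk ≥ m. If (s+1)k ≤ 2m, then b ∈ S_0 and n | m, i.e., the Petit algebra S_b is associative. -/

import Mathlib

/-!
Write `z = G(t)`. Applying `G` to `t^j c = σ^j(c) t^j` shows that `G(t^j) = z^j` (`j < m`) has
nonzero coefficients only in degrees `i` with `σ^i = σ^j`. Hence `z` lives in degrees `≡ 1 (mod n)`,
and since it is not a monomial its degree `k` is at least `n + 1 ≥ 3`.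

By minimality of `s`, `(s - 1)k < m`, so the powers `z^j`, `j < s`, are computed in `S[t;σ]`
without reduction, and `z^s` is the reduction of the skew power `P`, of degree `sk < 2m` and leading
coefficient `N ≠ 0`: below degree `m` its coefficients are those of `P + F`, where `F` is the part of
`P` of degree `≥ m` reduced by `t^(m+e) ≡ σ^e(b) t^e`. In degree `sk - m` this reads
`P_(sk-m) + N σ^(sk-m)(b)`, so one of the two summands is nonzero and `sk - m ≡ s`, i.e. `n ∣ m`.

Finally `z z^s = z^s z`, both being `G(t^(s+1))`. In degree `(s+1)k - m ≤ m` the products with `P`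
agree because `P` commutes with `z` in `S[t;σ]`, and the products with `F` contribute only their
top coefficients; this leaves `z_k σ(N σ^s(b)) = N σ^s(b) σ^s(z_k)`, and `z_k σ(N) = N σ^s(z_k)`
gives `σ(b) = b`.
-/

open Finset

noncomputable section

namespace PetitFormal

variable {S : Type*}

/-- Partial norm `N_i^τ(β) = ∏_{j=0}^{i-1} τ^j(β)`. -/
def pnorm [CommRing S] (τ : RingAut S) (i : ℕ) (β : S) : S :=
  ∏ j ∈ Finset.range i, (τ ^ j) β

/-- Multiplication in the skew polynomial ring `S[t;σ]`, with `t·a = σ(a)·t`,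
modelled on finitely supported functions `ℕ →₀ S`. -/
def skewMul [CommRing S] (σ : RingAut S) (x y : ℕ →₀ S) : ℕ →₀ S :=
  x.sum fun i c => y.sum fun j d => Finsupp.single (i + j) (c * (σ ^ i) d)

/-- Embedding of degree `< m` polynomials into `ℕ →₀ S`. -/
def toPoly [CommRing S] {m : ℕ} (x : Fin m → S) : ℕ →₀ S :=
  ∑ i : Fin m, Finsupp.single (i : ℕ) (x i)

/-- One pass of right division by the monic polynomial `f = t^m - f0(t)`:
`reduceAux σ m f0 K` reduces a skew polynomial supported in `[0, m+K)`
to one supported in `[0, m)`, using `t^{m+j} ≡ ∑_i σ^j(f0 i) t^{j+i}` (mod_r f). -/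
def reduceAux [CommRing S] (σ : RingAut S) (m : ℕ) (f0 : Fin m → S) :
    ℕ → (ℕ →₀ S) → (ℕ →₀ S)
  | 0, x => x
  | K + 1, x =>
      reduceAux σ m f0 K
        (x - Finsupp.single (m + K) (x (m + K))
          + ∑ j : Fin m, Finsupp.single (K + (j : ℕ)) (x (m + K) * (σ ^ K) (f0 j)))

/-- Multiplication in the (generally nonassociative) Petit algebra
`S_f = S[t;σ]/S[t;σ](t^m - f0(t))`: multiply in `S[t;σ]` and reduce by right
division by `f = t^m - f0(t)`. -/
def petitMul [CommRing S] (σ : RingAut S) (m : ℕ) (f0 : Fin m → S)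
    (x y : Fin m → S) : Fin m → S :=
  fun d => (reduceAux σ m f0 m (skewMul σ (toPoly x) (toPoly y))) (d : ℕ)

/-- The coefficient vector of the constant `a`, so that `t^m - f0 = t^m - a`. -/
def constF [CommRing S] (m : ℕ) (a : S) : Fin m → S :=
  fun i => if (i : ℕ) = 0 then a else 0

/-- Multiplication in the Petit algebra `S_a = S[t;σ]/S[t;σ](t^m - a)`. -/
def petitMulC [CommRing S] (σ : RingAut S) (m : ℕ) (a : S) :
    (Fin m → S) → (Fin m → S) → (Fin m → S) :=
  petitMul σ m (constF m a)

/-- The monomial `c t^k` as an element of the Petit algebra (zero if `k ≥ m`). -/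
def mono [CommRing S] (m : ℕ) (c : S) (k : ℕ) : Fin m → S :=
  fun i => if (i : ℕ) = k then c else 0

/-- The identity `1 = 1·t^0` of the Petit algebra. -/
def pone [CommRing S] (m : ℕ) : Fin m → S := mono m 1 0

/-- Left-nested power `L(z,s) = z(z(⋯(z)))` (`s` factors) in the Petit algebra. -/
def lpow [CommRing S] (σ : RingAut S) (m : ℕ) (f0 : Fin m → S) (z : Fin m → S) :
    ℕ → Fin m → S
  | 0 => pone m
  | s + 1 => petitMul σ m f0 z (lpow σ m f0 z s)

/-- `G` is a (unital) ring homomorphism from the Petit algebra `S_f` to `S_g`. -/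
def IsPetitHom [CommRing S] (σ : RingAut S) (m : ℕ) (f0 g0 : Fin m → S)
    (G : (Fin m → S) → (Fin m → S)) : Prop :=
  (∀ x y, G (x + y) = G x + G y) ∧
  (∀ x y, G (petitMul σ m f0 x y) = petitMul σ m g0 (G x) (G y)) ∧
  G (pone m) = pone m

/-- `G` is a (unital) ring endomorphism of the skew polynomial ring `S[t;σ]`. -/
def IsSkewHom [CommRing S] (σ : RingAut S) (G : (ℕ →₀ S) → (ℕ →₀ S)) : Prop :=
  (∀ x y, G (x + y) = G x + G y) ∧
  (∀ x y, G (skewMul σ x y) = skewMul σ (G x) (G y)) ∧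
  G (Finsupp.single 0 1) = Finsupp.single 0 1

/-- `G` is a (unital) ring homomorphism from `S[t;σ]` to the Petit algebra `S_g`. -/
def IsSkewToPetitHom [CommRing S] (σ : RingAut S) (m : ℕ) (g0 : Fin m → S)
    (G : (ℕ →₀ S) → (Fin m → S)) : Prop :=
  (∀ x y, G (x + y) = G x + G y) ∧
  (∀ x y, G (skewMul σ x y) = petitMul σ m g0 (G x) (G y)) ∧
  G (Finsupp.single 0 1) = pone m

/-- The monomial map `G_{τ,α,k}` on `S[t;σ]`:
`∑ a_i t^i ↦ ∑ τ(a_i) (α t^k)^i = ∑ τ(a_i) N_i^{σ^k}(α) t^{ik}`. -/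
def skewMonomialMap [CommRing S] (σ τ : RingAut S) (α : S) (k : ℕ)
    (x : ℕ →₀ S) : ℕ →₀ S :=
  x.sum fun i c => Finsupp.single (i * k) (τ c * pnorm (σ ^ k) i α)

/-- The monomial map `G_{τ,α,k}` from `S[t;σ]` into the Petit algebra `S_g`:
`∑ a_i t^i ↦ ∑ τ(a_i) (α t^k)^i`, powers computed by left nesting. -/
def skewToPetitMonomialMap [CommRing S] (σ τ : RingAut S) (m : ℕ)
    (g0 : Fin m → S) (α : S) (k : ℕ) (x : ℕ →₀ S) : Fin m → S :=
  x.sum fun i c => τ c • lpow σ m g0 (mono m α k) i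

/-- The monomial map `G_{τ,α,k}` between Petit algebras of degree `m`:
`∑_{i<m} a_i t^i ↦ ∑_{i<m} τ(a_i) (α t^k)^i`, powers computed by left nesting
in the codomain `S_g`. -/
def petitMonomialMap [CommRing S] (σ τ : RingAut S) (m : ℕ)
    (g0 : Fin m → S) (α : S) (k : ℕ) (x : Fin m → S) : Fin m → S :=
  ∑ i : Fin m, τ (x i) • lpow σ m g0 (mono m α k) (i : ℕ)

/-- The Hamming weight: the number of nonzero coefficients. -/
def hwt [CommRing S] {m : ℕ} (x : Fin m → S) : ℕ := by
  classical exact (Finset.univ.filter fun i => x i ≠ 0).card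

section SkewPolynomial

variable [CommRing S] (σ : RingAut S)

@[simp]
lemma skewMul_zero_left (y : ℕ →₀ S) : skewMul σ 0 y = 0 := by
  simp [skewMul]

@[simp]
lemma skewMul_zero_right (x : ℕ →₀ S) : skewMul σ x 0 = 0 := by
  simp [skewMul]

lemma skewMul_add_left (x x' y : ℕ →₀ S) :
    skewMul σ (x + x') y = skewMul σ x y + skewMul σ x' y := by
  refine Finsupp.sum_add_index' (fun i => by simp) fun i c c' => ?_
  rw [← Finsupp.sum_add]
  exact Finsupp.sum_congr fun j _ => by rw [add_mul, Finsupp.single_add]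

lemma skewMul_add_right (x y y' : ℕ →₀ S) :
    skewMul σ x (y + y') = skewMul σ x y + skewMul σ x y' := by
  rw [skewMul, skewMul, skewMul, ← Finsupp.sum_add]
  refine Finsupp.sum_congr fun i _ => Finsupp.sum_add_index' (fun j => by simp) fun j d d' => ?_
  rw [map_add, mul_add, Finsupp.single_add]

lemma skewMul_single_single (i j : ℕ) (c d : S) :
    skewMul σ (Finsupp.single i c) (Finsupp.single j d) =
      Finsupp.single (i + j) (c * (σ ^ i) d) := by
  rw [skewMul, Finsupp.sum_single_index (by simp), Finsupp.sum_single_index (by simp)]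

lemma skewMul_assoc (x y w : ℕ →₀ S) :
    skewMul σ (skewMul σ x y) w = skewMul σ x (skewMul σ y w) := by
  induction x using Finsupp.induction_linear with
  | zero => simp
  | add x x' hx hx' => rw [skewMul_add_left, skewMul_add_left, skewMul_add_left, hx, hx']
  | single i c =>
  induction y using Finsupp.induction_linear with
  | zero => simp
  | add y y' hy hy' =>
    rw [skewMul_add_right, skewMul_add_left, skewMul_add_left, skewMul_add_right, hy, hy']
  | single j d =>
  induction w using Finsupp.induction_linear with
  | zero => simp
  | add w w' hw hw' => simp only [skewMul_add_right, hw, hw']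
  | single l f =>
    simp only [skewMul_single_single, add_assoc, pow_add, mul_assoc, map_mul]
    rfl

lemma skewMul_single_apply (i : ℕ) (c : S) (y : ℕ →₀ S) (e : ℕ) :
    skewMul σ (Finsupp.single i c) y e = if i ≤ e then c * (σ ^ i) (y (e - i)) else 0 := by
  induction y using Finsupp.induction_linear with
  | zero => simp
  | add y y' hy hy' =>
    rw [skewMul_add_right, Finsupp.add_apply, hy, hy']
    split_ifs <;> simp [mul_add]
  | single j d =>
    rw [skewMul_single_single, Finsupp.single_apply]
    by_cases hi : i ≤ e
    · rw [if_pos hi, Finsupp.single_apply]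
      by_cases hj : j = e - i
      · rw [if_pos (by omega), if_pos hj]
      · rw [if_neg (by omega), if_neg hj, map_zero, mul_zero]
    · rw [if_neg (by omega), if_neg hi]

lemma skewMul_apply (x y : ℕ →₀ S) (e : ℕ) :
    skewMul σ x y e = ∑ i ∈ range (e + 1), x i * (σ ^ i) (y (e - i)) := by
  induction x using Finsupp.induction_linear with
  | zero => simp
  | add x x' hx hx' =>
    simp only [skewMul_add_left, Finsupp.add_apply, hx, hx', add_mul, sum_add_distrib]
  | single i c =>
    rw [skewMul_single_apply]
    by_cases hi : i ≤ e
    · rw [if_pos hi, sum_eq_single i (fun j _ hj => by simp [hj.symm])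
        (fun h => absurd (mem_range.2 (by omega)) h), Finsupp.single_eq_same]
    · rw [if_neg hi]
      refine (sum_eq_zero fun j hj => ?_).symm
      rw [Finsupp.single_apply, if_neg (by simp at hj; omega), zero_mul]

lemma skewMul_single_zero_one (y : ℕ →₀ S) : skewMul σ (Finsupp.single 0 1) y = y := by
  ext e
  simp [skewMul_single_apply]

lemma skewMul_single_zero_apply (x : ℕ →₀ S) (c : S) (e : ℕ) :
    skewMul σ x (Finsupp.single 0 c) e = x e * (σ ^ e) c := by
  rw [skewMul_apply, sum_eq_single e (fun i hi hie => ?_) (by simp)]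
  · simp
  · rw [Finsupp.single_apply, if_neg (by simp at hi; omega), map_zero, mul_zero]

lemma skewMul_single_zero_one_right (x : ℕ →₀ S) : skewMul σ x (Finsupp.single 0 1) = x := by
  ext e
  simp [skewMul_single_zero_apply]

variable {σ} {A B : ℕ →₀ S} {a c : ℕ}

lemma skewMul_apply_of_lt (hA : ∀ e, a < e → A e = 0) (hB : ∀ e, c < e → B e = 0) {e : ℕ}
    (he : a + c < e) : skewMul σ A B e = 0 := by
  rw [skewMul_apply]
  refine sum_eq_zero fun i _ => ?_
  by_cases hi : i ≤ a
  · rw [hB (e - i) (by omega), map_zero, mul_zero]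
  · rw [hA i (by omega), zero_mul]

lemma skewMul_apply_add (hA : ∀ e, a < e → A e = 0) (hB : ∀ e, c < e → B e = 0) :
    skewMul σ A B (a + c) = A a * (σ ^ a) (B c) := by
  rw [skewMul_apply, sum_eq_single a (fun i _ hia => ?_) (fun h => absurd (by simp) h),
    Nat.add_sub_cancel_left]
  rcases lt_or_gt_of_ne hia with hia | hia
  · rw [hB _ (by omega), map_zero, mul_zero]
  · rw [hA i hia, zero_mul]

lemma skewMul_apply_ne_zero_pow_eq {M : Type*} [Monoid M] {g : M}
    (hA : ∀ e, A e ≠ 0 → g ^ e = g ^ a) (hB : ∀ e, B e ≠ 0 → g ^ e = g ^ c) {e : ℕ}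
    (h : skewMul σ A B e ≠ 0) : g ^ e = g ^ (a + c) := by
  rw [skewMul_apply] at h
  obtain ⟨i, hi, hne⟩ := exists_ne_zero_of_sum_ne_zero h
  have hie : i + (e - i) = e := by simp at hi; omega
  rw [← hie, pow_add, pow_add, hA i (left_ne_zero_of_mul hne),
    hB (e - i) fun h0 => hne (by rw [h0, map_zero, mul_zero])]

lemma skewMul_apply_eq_add_right {Z Y : ℕ →₀ S} {r : ℕ} (hZ : Z 0 = 0)
    (hY : ∀ e < r, Y e = A e + B e) :
    skewMul σ Z Y r = skewMul σ Z A r + skewMul σ Z B r := by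
  simp only [skewMul_apply, ← sum_add_distrib]
  refine sum_congr rfl fun i hi => ?_
  rcases Nat.eq_zero_or_pos i with rfl | hi0
  · simp [hZ]
  · rw [hY (r - i) (by simp at hi; omega), map_add, mul_add]

lemma skewMul_apply_eq_add_left {Z Y : ℕ →₀ S} {r : ℕ} (hZ : Z 0 = 0)
    (hY : ∀ e < r, Y e = A e + B e) :
    skewMul σ Y Z r = skewMul σ A Z r + skewMul σ B Z r := by
  simp only [skewMul_apply, ← sum_add_distrib]
  refine sum_congr rfl fun i hi => ?_
  rcases (Nat.lt_succ_iff.1 (mem_range.1 hi)).lt_or_eq with hi | rfl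
  · rw [hY i hi, add_mul]
  · simp [hZ]

end SkewPolynomial

section SkewPow

variable [CommRing S] (σ : RingAut S)

def skewPow (Z : ℕ →₀ S) : ℕ → ℕ →₀ S
  | 0 => Finsupp.single 0 1
  | j + 1 => skewMul σ Z (skewPow Z j)

lemma skewMul_skewPow_comm (Z : ℕ →₀ S) (j : ℕ) :
    skewMul σ Z (skewPow σ Z j) = skewMul σ (skewPow σ Z j) Z := by
  induction j with
  | zero => rw [skewPow, skewMul_single_zero_one, skewMul_single_zero_one_right]
  | succ j ih => rw [skewPow, skewMul_assoc, ← ih]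

lemma pnorm_succ (τ : RingAut S) (i : ℕ) (β : S) :
    pnorm τ (i + 1) β = pnorm τ i β * (τ ^ i) β :=
  prod_range_succ _ _

lemma pnorm_succ' (τ : RingAut S) (i : ℕ) (β : S) :
    pnorm τ (i + 1) β = β * τ (pnorm τ i β) := by
  rw [pnorm, prod_range_succ', pnorm, map_prod, pow_zero, mul_comm]
  simp [pow_succ']

lemma pnorm_ne_zero [IsDomain S] (τ : RingAut S) (i : ℕ) {β : S} (hβ : β ≠ 0) :
    pnorm τ i β ≠ 0 :=
  prod_ne_zero_iff.2 fun j _ => (map_ne_zero_iff _ (τ ^ j).injective).2 hβ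

variable {σ} {Z : ℕ →₀ S} {k : ℕ}

lemma skewPow_apply_of_lt (hZ : ∀ e, k < e → Z e = 0) (j : ℕ) {e : ℕ} (he : j * k < e) :
    skewPow σ Z j e = 0 := by
  induction j generalizing e with
  | zero => rw [skewPow, Finsupp.single_apply, if_neg (by omega)]
  | succ j ih => exact skewMul_apply_of_lt hZ (fun _ => ih) (by rw [add_mul] at he; omega)

lemma skewPow_apply_mul (hZ : ∀ e, k < e → Z e = 0) (j : ℕ) :
    skewPow σ Z j (j * k) = pnorm (σ ^ k) j (Z k) := by
  induction j with
  | zero => simp [skewPow, pnorm]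
  | succ j ih =>
    rw [skewPow, add_one_mul, add_comm, skewMul_apply_add hZ fun _ => skewPow_apply_of_lt hZ j,
      ih, pnorm_succ']

lemma skewPow_pow_eq {M : Type*} [Monoid M] {g : M} (hZ : ∀ e, Z e ≠ 0 → g ^ e = g) (j : ℕ)
    {e : ℕ} (he : skewPow σ Z j e ≠ 0) : g ^ e = g ^ j := by
  induction j generalizing e with
  | zero =>
    by_contra h
    exact he (by rw [skewPow, Finsupp.single_apply, if_neg (by rintro rfl; simp at h)])
  | succ j ih =>
    rw [add_comm]
    exact skewMul_apply_ne_zero_pow_eq (fun e h => (hZ e h).trans (pow_one g).symm)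
      (fun _ => ih) he

end SkewPow

section PetitAlgebra

variable [CommRing S] (σ : RingAut S) {m : ℕ}

lemma toPoly_apply_of_lt (x : Fin m → S) {e : ℕ} (he : e < m) : toPoly x e = x ⟨e, he⟩ := by
  rw [toPoly, Finsupp.finsetSum_apply, sum_eq_single ⟨e, he⟩ (fun i _ hi => ?_) (by simp)]
  · simp
  · rw [Finsupp.single_apply, if_neg (fun h => hi (Fin.ext h))]

lemma toPoly_apply_of_le (x : Fin m → S) {e : ℕ} (he : m ≤ e) : toPoly x e = 0 := by
  rw [toPoly, Finsupp.finsetSum_apply]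
  exact sum_eq_zero fun i _ => by rw [Finsupp.single_apply, if_neg (by omega)]

lemma toPoly_apply_val (x : Fin m → S) (d : Fin m) : toPoly x d = x d :=
  toPoly_apply_of_lt x d.isLt

lemma toPoly_injective : Function.Injective (toPoly : (Fin m → S) → ℕ →₀ S) := fun x y h =>
  funext fun d => by rw [← toPoly_apply_val x, h, toPoly_apply_val]

lemma toPoly_mono (c : S) {k : ℕ} (hk : k < m) : toPoly (mono m c k) = Finsupp.single k c := by
  ext e
  rcases lt_or_ge e m with he | he
  · rw [toPoly_apply_of_lt _ he, mono, Finsupp.single_apply]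
    exact if_congr eq_comm rfl rfl
  · rw [toPoly_apply_of_le _ he, Finsupp.single_apply, if_neg (by omega)]

lemma reduceAux_of_le (f0 : Fin m → S) (K : ℕ) {x : ℕ →₀ S} (hx : ∀ e, m ≤ e → x e = 0) :
    reduceAux σ m f0 K x = x := by
  induction K with
  | zero => rfl
  | succ K ih => simp [reduceAux, hx (m + K) (by omega), ih]

lemma toPoly_petitMul_of_le (f0 : Fin m → S) {x y : Fin m → S}
    (h : ∀ e, m ≤ e → skewMul σ (toPoly x) (toPoly y) e = 0) :
    toPoly (petitMul σ m f0 x y) = skewMul σ (toPoly x) (toPoly y) := by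
  ext e
  rcases lt_or_ge e m with he | he
  · rw [toPoly_apply_of_lt _ he, petitMul, reduceAux_of_le σ f0 m h]
  · rw [toPoly_apply_of_le _ he, h e he]

lemma petitMul_mono_mono (f0 : Fin m → S) (c d : S) {i j : ℕ} (hij : i + j < m) :
    petitMul σ m f0 (mono m c i) (mono m d j) = mono m (c * (σ ^ i) d) (i + j) := by
  have hprod : skewMul σ (toPoly (mono m c i)) (toPoly (mono m d j)) =
      Finsupp.single (i + j) (c * (σ ^ i) d) := by
    rw [toPoly_mono c (by omega), toPoly_mono d (by omega), skewMul_single_single]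
  refine toPoly_injective ?_
  rw [toPoly_mono _ hij, toPoly_petitMul_of_le σ f0 fun e he => ?_, hprod]
  rw [hprod, Finsupp.single_apply, if_neg (by omega)]

lemma petitMul_mono_zero_right (f0 : Fin m → S) (x : Fin m → S) (c : S) (i : Fin m) :
    petitMul σ m f0 x (mono m c 0) i = x i * (σ ^ (i : ℕ)) c := by
  rw [← toPoly_apply_val (petitMul σ m f0 x (mono m c 0))]
  have hm : 0 < m := i.pos
  have hprod : ∀ e, skewMul σ (toPoly x) (toPoly (mono m c 0)) e = toPoly x e * (σ ^ e) c :=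
    fun e => by rw [toPoly_mono c hm, skewMul_single_zero_apply]
  rw [toPoly_petitMul_of_le σ f0 fun e he => ?_, hprod, toPoly_apply_val]
  rw [hprod, toPoly_apply_of_le x he, zero_mul]

lemma petitMul_mono_zero_left (f0 : Fin m → S) (c : S) (y : Fin m → S) (i : Fin m) :
    petitMul σ m f0 (mono m c 0) y i = c * y i := by
  rw [← toPoly_apply_val (petitMul σ m f0 (mono m c 0) y)]
  have hm : 0 < m := i.pos
  have hprod : ∀ e, skewMul σ (toPoly (mono m c 0)) (toPoly y) e = c * toPoly y e :=
    fun e => by simp [toPoly_mono c hm, skewMul_single_apply]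
  rw [toPoly_petitMul_of_le σ f0 fun e he => ?_, hprod, toPoly_apply_val]
  rw [hprod, toPoly_apply_of_le y he, mul_zero]

/-- The terms of degree `≥ m` of `P`, reduced modulo `t^m - a` through
`t^(m+e) = t^e (t^m - a) + σ^e(a) t^e`. -/
def foldHigh (m : ℕ) (a : S) (P : ℕ →₀ S) : ℕ →₀ S :=
  ∑ e ∈ range m, Finsupp.single e (P (m + e) * (σ ^ e) a)

lemma foldHigh_apply (a : S) (P : ℕ →₀ S) (e : ℕ) :
    foldHigh σ m a P e = if e < m then P (m + e) * (σ ^ e) a else 0 := by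
  rw [foldHigh, Finsupp.finsetSum_apply]
  split_ifs with he
  · rw [sum_eq_single e (fun i _ hi => by rw [Finsupp.single_apply, if_neg hi])
      (by simp [he]), Finsupp.single_eq_same]
  · exact sum_eq_zero fun i hi => by
      rw [Finsupp.single_apply, if_neg (by simp at hi; omega)]

lemma reduceAux_constF_apply (a : S) {K : ℕ} (hK : K ≤ m) (x : ℕ →₀ S) {r : ℕ} (hr : r < m) :
    reduceAux σ m (constF m a) K x r = x r + if r < K then x (m + r) * (σ ^ r) a else 0 := by
  induction K generalizing x with
  | zero => simp [reduceAux]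
  | succ K ih =>
    have hsum : ∑ j : Fin m, Finsupp.single (K + (j : ℕ)) (x (m + K) * (σ ^ K) (constF m a j)) =
        Finsupp.single K (x (m + K) * (σ ^ K) a) := by
      rw [sum_eq_single ⟨0, by omega⟩ (fun j _ hj => ?_) (by simp)]
      · simp [constF]
      · simp [constF, show (j : ℕ) ≠ 0 from fun h => hj (Fin.ext h)]
    rw [reduceAux, hsum, ih (by omega)]
    simp only [Finsupp.add_apply, Finsupp.sub_apply, Finsupp.single_apply]
    rcases lt_trichotomy r K with h | rfl | h
    · simp [h, h.ne', h.trans (Nat.lt_succ_self K), show m + K ≠ r by omega,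
        show K ≠ m + r by omega]
    · simp [show m ≠ 0 by omega]
    · simp [h.ne, show ¬ r < K by omega, show ¬ r < K + 1 by omega, show m + K ≠ r by omega]

lemma petitMul_constF_apply (a : S) (x y : Fin m → S) (d : Fin m) :
    petitMul σ m (constF m a) x y d =
      skewMul σ (toPoly x) (toPoly y) d + foldHigh σ m a (skewMul σ (toPoly x) (toPoly y)) d := by
  rw [petitMul, reduceAux_constF_apply σ a le_rfl _ d.isLt, foldHigh_apply]

end PetitAlgebra

section HammingWeight

variable [CommRing S] {m : ℕ}

lemma hwt_le (x : Fin m → S) : hwt x ≤ m := by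
  classical
  simpa [hwt] using card_filter_le (univ : Finset (Fin m)) fun i => x i ≠ 0

lemma hwt_le_one {x : Fin m → S} {c : ℕ} (h : ∀ i, x i ≠ 0 → (i : ℕ) = c) :
    hwt x ≤ 1 := by
  classical
  simp only [hwt]
  exact card_le_one.2 fun i hi j hj => Fin.ext (by simp at hi hj; rw [h i hi, h j hj])

lemma two_le_of_two_le_hwt {x : Fin m → S} {k : ℕ} (h0 : toPoly x 0 = 0)
    (hk : ∀ i : Fin m, k < i → x i = 0) (hx : 2 ≤ hwt x) : 2 ≤ k := by
  by_contra h
  refine absurd hx (not_le.2 (Nat.lt_succ_of_le (hwt_le_one (c := 1) fun i hi => ?_)))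
  have hi0 : (i : ℕ) ≠ 0 := fun h' => hi (by rw [← toPoly_apply_val x, h', h0])
  have hik : (i : ℕ) ≤ k := by
    by_contra h'
    exact hi (hk i (by omega))
  omega

end HammingWeight

lemma sub_one_mul_lt_of_minimal {m k s : ℕ} (hkm : k < m) (hs1 : 1 < s)
    (hleast : ∀ s' : ℕ, 1 < s' → m ≤ s' * k → s ≤ s') : (s - 1) * k < m := by
  rcases (show s = 2 ∨ 2 < s by omega) with rfl | h
  · simpa using hkm
  · by_contra h'
    have := hleast (s - 1) (by omega) (by omega)
    omega

lemma orderOf_lt_of_pow_eq_self {M : Type*} [Group M] {g : M} {k : ℕ} (hk : 2 ≤ k)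
    (h : g ^ k = g) : orderOf g < k := by
  have hk1 : g ^ (k - 1) = 1 := by
    rwa [← Nat.sub_one_add_one (show k ≠ 0 by omega), pow_succ, mul_eq_right] at h
  have := orderOf_le_of_pow_eq_one (by omega) hk1
  omega

section Homomorphism

variable [CommRing S] {σ τ : RingAut S} {m : ℕ} {f0 g0 : Fin m → S}
  {G : (Fin m → S) → (Fin m → S)}

lemma IsPetitHom.map_mono_one (hG : IsPetitHom σ m f0 g0 G) {j : ℕ} (hj : j < m) :
    G (mono m 1 j) = lpow σ m g0 (G (mono m 1 1)) j := by
  induction j with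
  | zero => exact hG.2.2
  | succ j ih =>
    rw [lpow, ← ih (by omega), ← hG.2.1, petitMul_mono_mono σ f0 1 1 (by omega), map_one, mul_one,
      add_comm]

lemma IsPetitHom.lpow_comm (hG : IsPetitHom σ m f0 g0 G) {s : ℕ} (hs : s + 1 < m) :
    petitMul σ m g0 (G (mono m 1 1)) (lpow σ m g0 (G (mono m 1 1)) s) =
      petitMul σ m g0 (lpow σ m g0 (G (mono m 1 1)) s) (G (mono m 1 1)) := by
  rw [← hG.map_mono_one (by omega), ← hG.2.1, ← hG.2.1, petitMul_mono_mono σ f0 1 1 (by omega),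
    petitMul_mono_mono σ f0 1 1 (by omega), add_comm]
  simp

lemma IsPetitHom.pow_eq_of_lpow_apply_ne_zero [IsDomain S] (hG : IsPetitHom σ m f0 g0 G)
    (hres : ∀ c : S, G (mono m c 0) = mono m (τ c) 0) (hcomm : ∀ x, τ (σ x) = σ (τ x))
    {j : ℕ} (hj : j < m) {i : Fin m} (hi : lpow σ m g0 (G (mono m 1 1)) j i ≠ 0) :
    σ ^ (i : ℕ) = σ ^ j := by
  have hτ : Commute τ σ := RingEquiv.ext hcomm
  ext a
  obtain ⟨c, rfl⟩ := τ.surjective a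
  have hmono : petitMul σ m f0 (mono m 1 j) (mono m c 0) =
      petitMul σ m f0 (mono m ((σ ^ j) c) 0) (mono m 1 j) := by
    rw [petitMul_mono_mono σ f0 _ _ (by omega), petitMul_mono_mono σ f0 _ _ (by omega)]
    simp
  have hcoef := congrFun (congrArg G hmono) i
  rw [hG.2.1, hG.2.1, hres, hres, hG.map_mono_one hj, petitMul_mono_zero_right,
    petitMul_mono_zero_left, ← RingAut.mul_apply τ, (hτ.pow_right j).eq, RingAut.mul_apply,
    mul_comm] at hcoef
  exact mul_right_cancel₀ hi hcoef

lemma IsPetitHom.pow_eq_of_toPoly_apply_ne_zero [IsDomain S] (hG : IsPetitHom σ m f0 g0 G)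
    (hres : ∀ c : S, G (mono m c 0) = mono m (τ c) 0) (hcomm : ∀ x, τ (σ x) = σ (τ x))
    (hm : 1 < m) {e : ℕ} (he : toPoly (G (mono m 1 1)) e ≠ 0) : σ ^ e = σ := by
  rcases lt_or_ge e m with hem | hem
  · rw [toPoly_apply_of_lt _ hem] at he
    have hlpow : lpow σ m g0 (G (mono m 1 1)) 1 ⟨e, hem⟩ ≠ 0 := by
      rwa [lpow, lpow, pone, petitMul_mono_zero_right, map_one, mul_one]
    simpa using hG.pow_eq_of_lpow_apply_ne_zero hres hcomm hm hlpow
  · exact absurd (toPoly_apply_of_le _ hem) he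

end Homomorphism

section ConstantReduction

variable [CommRing S] {σ : RingAut S} {m : ℕ} {a : S}

lemma foldHigh_apply_of_lt (P : ℕ →₀ S) {e : ℕ} (he : e < m) :
    foldHigh σ m a P e = P (m + e) * (σ ^ e) a := by
  rw [foldHigh_apply, if_pos he]

lemma foldHigh_apply_eq_zero {P : ℕ →₀ S} {d : ℕ} (hP : ∀ e, d < e → P e = 0) {e : ℕ}
    (he : d < m + e) : foldHigh σ m a P e = 0 := by
  rw [foldHigh_apply]
  split_ifs
  · rw [hP _ he, zero_mul]
  · rfl

lemma skewMul_apply_eq_of_petitMul_constF_eq [IsDomain S] (ha : a ≠ 0) {x y x' y' : Fin m → S}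
    (h : petitMul σ m (constF m a) x y = petitMul σ m (constF m a) x' y') {r : ℕ} (hr : r ≤ m)
    (h0 : skewMul σ (toPoly x) (toPoly y) 0 = 0) (h0' : skewMul σ (toPoly x') (toPoly y') 0 = 0)
    (htop : skewMul σ (toPoly x) (toPoly y) (m + r) = 0)
    (htop' : skewMul σ (toPoly x') (toPoly y') (m + r) = 0) :
    skewMul σ (toPoly x) (toPoly y) r = skewMul σ (toPoly x') (toPoly y') r := by
  rcases hr.lt_or_eq with hr | rfl
  · have hcoef := congrFun h ⟨r, hr⟩
    rwa [petitMul_constF_apply, petitMul_constF_apply, foldHigh_apply_of_lt _ hr,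
      foldHigh_apply_of_lt _ hr, htop, htop', zero_mul, add_zero, add_zero] at hcoef
  · rcases Nat.eq_zero_or_pos r with rfl | hr0
    · rw [h0, h0']
    · have hcoef := congrFun h ⟨0, hr0⟩
      rw [petitMul_constF_apply, petitMul_constF_apply, foldHigh_apply_of_lt _ hr0,
        foldHigh_apply_of_lt _ hr0, add_zero, h0, h0', zero_add, zero_add] at hcoef
      exact mul_right_cancel₀ (by simpa using ha) hcoef

variable {z : Fin m → S} {k : ℕ}

lemma toPoly_lpow (g0 : Fin m → S) (hz : ∀ e, k < e → toPoly z e = 0) {j : ℕ} (hj : j * k < m) :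
    toPoly (lpow σ m g0 z j) = skewPow σ (toPoly z) j := by
  induction j with
  | zero => exact toPoly_mono 1 (by omega)
  | succ j ih =>
    have hjk : j * k < m := by rw [add_one_mul] at hj; omega
    rw [lpow, toPoly_petitMul_of_le σ g0 fun e he => ?_, ih hjk]
    · rfl
    · rw [ih hjk]
      exact skewPow_apply_of_lt hz (j + 1) (by omega)

lemma toPoly_lpow_apply_of_lt (hz : ∀ e, k < e → toPoly z e = 0) {s : ℕ} (hs0 : 0 < s)
    (hs : (s - 1) * k < m) {e : ℕ} (he : e < m) :
    toPoly (lpow σ m (constF m a) z s) e =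
      skewPow σ (toPoly z) s e + foldHigh σ m a (skewPow σ (toPoly z) s) e := by
  obtain ⟨j, rfl⟩ := Nat.exists_eq_add_one_of_ne_zero hs0.ne'
  rw [toPoly_apply_of_lt _ he, lpow, petitMul_constF_apply, toPoly_lpow _ hz (by simpa using hs)]
  rfl

variable [IsDomain S] {s : ℕ}

lemma pow_mul_sub_eq_pow (ha : a ≠ 0) (hz : ∀ e, k < e → toPoly z e = 0)
    (hzk : toPoly z k ≠ 0) (hzres : ∀ e, toPoly z e ≠ 0 → σ ^ e = σ) (hs0 : 0 < s)
    (hs : (s - 1) * k < m) (hsk : m ≤ s * k) (hkm : k < m)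
    (hsupp : ∀ i : Fin m, lpow σ m (constF m a) z s i ≠ 0 → σ ^ (i : ℕ) = σ ^ s) :
    σ ^ (s * k - m) = σ ^ s := by
  have he : s * k - m < m := by
    have : (s - 1) * k + k = s * k := by rw [← add_one_mul, Nat.sub_one_add_one hs0.ne']
    omega
  have hcoef := toPoly_lpow_apply_of_lt (σ := σ) (a := a) hz hs0 hs he
  rw [foldHigh_apply_of_lt _ he, Nat.add_sub_cancel' hsk, skewPow_apply_mul hz] at hcoef
  by_cases hY : toPoly (lpow σ m (constF m a) z s) (s * k - m) = 0
  · refine skewPow_pow_eq (σ := σ) hzres s fun hP => ?_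
    rw [hY, hP, zero_add, eq_comm] at hcoef
    exact mul_ne_zero (pnorm_ne_zero _ s hzk) ((map_ne_zero_iff _ (σ ^ _).injective).2 ha) hcoef
  · rw [toPoly_apply_of_lt _ he] at hY
    exact hsupp _ hY

lemma apply_eq_self_of_lpow_comm (ha : a ≠ 0) (hz0 : toPoly z 0 = 0)
    (hz : ∀ e, k < e → toPoly z e = 0) (hzk : toPoly z k ≠ 0) (hσk : σ ^ k = σ) (hs0 : 0 < s)
    (hs : (s - 1) * k < m) (hsk : m ≤ s * k) (hstar : (s + 1) * k ≤ 2 * m)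
    (hσs : σ ^ (s * k - m) = σ ^ s)
    (hcomm : petitMul σ m (constF m a) z (lpow σ m (constF m a) z s) =
      petitMul σ m (constF m a) (lpow σ m (constF m a) z s) z) :
    σ a = a := by
  set Z := toPoly z
  set P := skewPow σ Z s
  set F := foldHigh σ m a P
  set Y := toPoly (lpow σ m (constF m a) z s)
  have hkm : k < m := by
    by_contra h
    exact hzk (toPoly_apply_of_le z (by omega))
  have hsk_pred : (s - 1) * k + k = s * k := by rw [← add_one_mul, Nat.sub_one_add_one hs0.ne']
  have hsk_succ : (s + 1) * k = s * k + k := add_one_mul s k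
  have hr : (s + 1) * k - m = k + (s * k - m) := by omega
  have hF : ∀ e, s * k - m < e → F e = 0 :=
    fun e he => foldHigh_apply_eq_zero (fun _ => skewPow_apply_of_lt hz s) (by omega)
  have hFtop : F (s * k - m) = pnorm σ s (Z k) * (σ ^ s) a := by
    rw [foldHigh_apply_of_lt _ (by omega), Nat.add_sub_cancel' hsk, skewPow_apply_mul hz, hσk, hσs]
  have hYPF : ∀ e < (s + 1) * k - m, Y e = P e + F e :=
    fun e he => toPoly_lpow_apply_of_lt hz hs0 hs (by omega)
  have hY : ∀ e, m - 1 < e → Y e = 0 := fun e he => toPoly_apply_of_le _ (by omega)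
  have hcoef : skewMul σ Z Y ((s + 1) * k - m) = skewMul σ Y Z ((s + 1) * k - m) :=
    skewMul_apply_eq_of_petitMul_constF_eq ha hcomm (by omega) (by simp [skewMul_apply, Z, hz0])
      (by simp [skewMul_apply, Z, hz0]) (skewMul_apply_of_lt hz hY (by omega))
      (skewMul_apply_of_lt hY hz (by omega))
  rw [skewMul_apply_eq_add_right hz0 hYPF, skewMul_apply_eq_add_left hz0 hYPF,
    skewMul_skewPow_comm, add_right_inj, hr, skewMul_apply_add hz hF, add_comm k,
    skewMul_apply_add hF hz, hFtop, hσk, hσs] at hcoef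
  have hp : Z k * σ (pnorm σ s (Z k)) ≠ 0 :=
    mul_ne_zero hzk ((map_ne_zero_iff _ σ.injective).2 (pnorm_ne_zero σ s hzk))
  have key : Z k * σ (pnorm σ s (Z k)) * σ ((σ ^ s) a) =
      Z k * σ (pnorm σ s (Z k)) * (σ ^ s) a :=
    calc _ = pnorm σ s (Z k) * (σ ^ s) a * (σ ^ s) (Z k) := by rw [← hcoef, map_mul, mul_assoc]
      _ = pnorm σ (s + 1) (Z k) * (σ ^ s) a := by rw [pnorm_succ]; ring
      _ = _ := by rw [pnorm_succ']
  have hσσs := mul_left_cancel₀ hp key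
  rw [← RingAut.mul_apply, ← pow_succ', pow_succ, RingAut.mul_apply] at hσσs
  exact (σ ^ s).injective hσσs

end ConstantReduction

end PetitFormal

open PetitFormal

theorem stmt17_general {S : Type*} [CommRing S] [IsDomain S] (σ τ : RingAut S)
    (n : ℕ) (hn : orderOf σ = n) (hn2 : 2 ≤ n) (m : ℕ)
    (hcomm : ∀ x, τ (σ x) = σ (τ x)) (f0 : Fin m → S) (b : Sˣ)
    (G : (Fin m → S) → (Fin m → S))
    (hhom : IsPetitHom σ m f0 (constF m (b : S)) G)
    (hres : ∀ c : S, G (mono m c 0) = mono m (τ c) 0)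
    (hnonmono : 2 ≤ hwt (G (mono m 1 1)))
    (k : ℕ)
    (hdegk : ∃ d : Fin m, (d : ℕ) = k ∧ G (mono m 1 1) d ≠ 0)
    (hdegk' : ∀ d : Fin m, k < (d : ℕ) → G (mono m 1 1) d = 0)
    (s : ℕ) (hs1 : 1 < s) (hsk : m ≤ s * k)
    (hleast : ∀ s' : ℕ, 1 < s' → m ≤ s' * k → s ≤ s')
    (hstar : (s + 1) * k ≤ 2 * m) :
    σ (b : S) = (b : S) ∧ n ∣ m := by
  subst hn
  set z := G (mono m 1 1)
  have hm2 : 2 ≤ m := hnonmono.trans (hwt_le z)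
  have hzres : ∀ e, toPoly z e ≠ 0 → σ ^ e = σ := fun e =>
    hhom.pow_eq_of_toPoly_apply_ne_zero hres hcomm hm2
  obtain ⟨d, rfl, hd⟩ := hdegk
  have hzk : toPoly z d ≠ 0 := by rwa [toPoly_apply_val]
  have hz : ∀ e, (d : ℕ) < e → toPoly z e = 0 := fun e he => by
    rcases lt_or_ge e m with hem | hem
    · rw [toPoly_apply_of_lt _ hem, hdegk' _ he]
    · exact toPoly_apply_of_le _ hem
  have hz0 : toPoly z 0 = 0 := by
    by_contra h
    have hσ : σ = 1 := by simpa using (hzres 0 h).symm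
    simp [hσ] at hn2
  have hk3 : 3 ≤ (d : ℕ) := by
    have := orderOf_lt_of_pow_eq_self (two_le_of_two_le_hwt hz0 hdegk' hnonmono) (hzres d hzk)
    omega
  have hs1k : (s - 1) * d < m := sub_one_mul_lt_of_minimal d.isLt hs1 hleast
  have hsm : s + 1 < m := by
    have := Nat.mul_le_mul_left (s - 1) hk3
    omega
  have hσs := pow_mul_sub_eq_pow b.ne_zero hz hzk hzres (by omega) hs1k hsk d.isLt
    (fun i => hhom.pow_eq_of_lpow_apply_ne_zero hres hcomm (by omega))
  refine ⟨apply_eq_self_of_lpow_comm b.ne_zero hz0 hz hzk (hzres d hzk) (by omega) hs1k hsk hstar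
    hσs (hhom.lpow_comm hsm), orderOf_dvd_of_pow_eq_one ?_⟩
  exact mul_eq_left.1 <| by rw [← pow_add, Nat.sub_add_cancel hsk, hσs, pow_mul', hzres d hzk]

/-- Theorem `thm:main`: over an integral domain, if `G : S_f → S_b` is a
non-monomial homomorphism with `G|_S = τ` commuting with `σ`, `k = deg G(t)`,
`s > 1` least with `sk ≥ m`, and `(s+1)k ≤ 2m`, then `b ∈ S_0` and `n ∣ m`,
i.e. `S_b` is associative. -/
theorem stmt17 {S : Type*} [CommRing S] [IsDomain S] (σ τ : RingAut S)
    (n : ℕ) (hn : orderOf σ = n) (hn2 : 2 ≤ n) (m : ℕ) (hm : 0 < m)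
    (hcomm : ∀ x, τ (σ x) = σ (τ x)) (f0 : Fin m → S) (b : Sˣ)
    (G : (Fin m → S) → (Fin m → S))
    (hhom : IsPetitHom σ m f0 (constF m (b : S)) G)
    (hres : ∀ c : S, G (mono m c 0) = mono m (τ c) 0)
    (hnonmono : 2 ≤ hwt (G (mono m 1 1)))
    (k : ℕ)
    (hdegk : ∃ d : Fin m, (d : ℕ) = k ∧ G (mono m 1 1) d ≠ 0)
    (hdegk' : ∀ d : Fin m, k < (d : ℕ) → G (mono m 1 1) d = 0)
    (s : ℕ) (hs1 : 1 < s) (hsk : m ≤ s * k)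
    (hleast : ∀ s' : ℕ, 1 < s' → m ≤ s' * k → s ≤ s')
    (hstar : (s + 1) * k ≤ 2 * m) :
    σ (b : S) = (b : S) ∧ n ∣ m :=
  stmt17_general σ τ n hn hn2 m hcomm f0 b G hhom hres hnonmono k hdegk hdegk' s hs1 hsk hleast
    hstar
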